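/- arXiv:1112.3128 — 2 statements merged into one kernel-verified Lean document; each statement's English description precedes it below -/
import Mathlib

section
/- Let (X_i)_{i∈I} be a family of complex vector spaces, let u ∈ Π_{i∈I} X_i satisfy u_i ≠ 0 for every i ∈ I, and let F ⊆ I be a finite nonempty subset. Let J_F^u : ⨂_{i∈F} X_i → ⨂_{i∈I} X_i be the ℂ-linear map determined on elementary tensors by J_F^u(⊗_{i∈F} x_i) = ⊗_{i∈I} x̃_i, where x̃_i = x_i for i ∈ F and x̃_i = u_i for i ∈ I∖F. Then J_F^u is injective. -/
/-!
Split `⨂_{i ∈ I} X_i` as `(⨂_{i ∈ F} X_i) ⊗ (⨂_{i ∉ F} X_i)`. Then `J` becomes `x ↦ x ⊗ t` with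
`t = ⊗_{i ∉ F} u_i`, which is injective as soon as some linear functional takes the value `1`
at `t`. Choosing `φ_i` with `φ_i (u_i) = 1`, such a functional is induced by the multilinear map
`y ↦ ∏ φ_i (y_i)`, where a product with infinitely many factors different from `1` is read as `0`.
-/

open scoped TensorProduct
open Function

open scoped Classical in
/-- Unlike `finprod`, which returns `1` when infinitely many factors differ from `1`, this is
linear in each factor. -/
noncomputable def finprodOrZero {κ M : Type*} [CommMonoidWithZero M] (x : κ → M) : M :=
  if x.HasFiniteMulSupport then ∏ᶠ i, x i else 0

theorem finprodOrZero_one {κ M : Type*} [CommMonoidWithZero M] :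
    finprodOrZero (fun _ : κ => (1 : M)) = 1 := by
  rw [finprodOrZero, if_pos hasFiniteMulSupport_one, finprod_one]

theorem hasFiniteMulSupport_update_iff {κ M : Type*} [One M] [DecidableEq κ] (x : κ → M) (j : κ)
    (a : M) : (update x j a).HasFiniteMulSupport ↔ x.HasFiniteMulSupport := by
  classical
  simp only [HasFiniteMulSupport, mulSupport_update_eq_ite]
  split_ifs
  · exact ⟨fun h => h.of_sdiff (Set.finite_singleton j), fun h => h.sdiff⟩
  · exact Set.finite_insert

theorem finprodOrZero_update {κ M : Type*} [CommMonoidWithZero M] [DecidableEq κ] (x : κ → M)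
    (j : κ) (a : M) : finprodOrZero (update x j a) = a * finprodOrZero (update x j 1) := by
  have hsplit : update x j a = fun i => (Pi.mulSingle j a : κ → M) i * update x j 1 i := by
    funext i
    rcases eq_or_ne i j with rfl | h <;> simp [*]
  have hsingle : ∏ᶠ i, (Pi.mulSingle j a : κ → M) i = a := by
    rw [finprod_eq_single _ j fun i hi => by simp [hi], Pi.mulSingle_eq_same]
  by_cases hx : x.HasFiniteMulSupport
  · have hx1 := (hasFiniteMulSupport_update_iff x j 1).2 hx
    rw [finprodOrZero, finprodOrZero, if_pos ((hasFiniteMulSupport_update_iff x j a).2 hx),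
      if_pos hx1, hsplit,
      finprod_mul_distrib ((Set.finite_singleton j).subset Pi.mulSupport_mulSingle_subset) hx1,
      hsingle]
  · rw [finprodOrZero, finprodOrZero, if_neg (mt (hasFiniteMulSupport_update_iff x j a).1 hx),
      if_neg (mt (hasFiniteMulSupport_update_iff x j 1).1 hx), mul_zero]

namespace MultilinearMap

variable {ι R : Type*} [CommSemiring R] {X : ι → Type*} [∀ i, AddCommMonoid (X i)]
  [∀ i, Module R (X i)]

noncomputable def finprodOrZero (ψ : ∀ i, X i →ₗ[R] R) : MultilinearMap R X R where
  toFun y := _root_.finprodOrZero fun i => ψ i (y i)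
  map_update_add' y j a b := by
    simp only [apply_update (fun i => ψ i), map_add]
    rw [finprodOrZero_update, finprodOrZero_update _ _ (ψ j a),
      finprodOrZero_update _ _ (ψ j b), add_mul]
  map_update_smul' y j c a := by
    simp only [apply_update (fun i => ψ i), map_smul, smul_eq_mul]
    rw [finprodOrZero_update, finprodOrZero_update _ _ (ψ j a), mul_assoc]

theorem finprodOrZero_apply (ψ : ∀ i, X i →ₗ[R] R) (y : ∀ i, X i) :
    finprodOrZero ψ y = _root_.finprodOrZero fun i => ψ i (y i) :=
  rfl

end MultilinearMap

namespace PiTensorProduct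

theorem exists_dual_tprod_eq_one {ι K : Type*} [Field K] {X : ι → Type*}
    [∀ i, AddCommGroup (X i)] [∀ i, Module K (X i)] {u : ∀ i, X i} (hu : ∀ i, u i ≠ 0) :
    ∃ φ : Module.Dual K (⨂[K] i, X i), φ (tprod K u) = 1 := by
  choose ψ hψ using fun i => Module.Projective.exists_dual_eq_one K (hu i)
  refine ⟨lift (MultilinearMap.finprodOrZero ψ), ?_⟩
  simp only [lift.tprod, MultilinearMap.finprodOrZero_apply, hψ, finprodOrZero_one]

variable {ι : Type*} (R : Type*) [CommSemiring R] {X : ι → Type*} [∀ i, AddCommMonoid (X i)]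
  [∀ i, Module R (X i)] (p : ι → Prop) [DecidablePred p]

noncomputable def subtypeComplEquiv :
    (⨂[R] i, X i) ≃ₗ[R] (⨂[R] i : {i // p i}, X i) ⊗[R] (⨂[R] i : {i // ¬p i}, X i) :=
  (reindex R X (Equiv.sumCompl p).symm).trans
    (tmulEquivDep R fun k => X ((Equiv.sumCompl p).symm.symm k)).symm

theorem subtypeComplEquiv_tprod (f : ∀ i, X i) :
    subtypeComplEquiv R p (tprod R f) =
      tprod R (fun i : {i // p i} => f i) ⊗ₜ tprod R (fun i : {i // ¬p i} => f i) :=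
  (congrArg _ (reindex_tprod (Equiv.sumCompl p).symm f)).trans (tmulEquivDep_symm_apply R _ _)

end PiTensorProduct

theorem TensorProduct.tmul_right_injective_of_apply_eq_one {R M N : Type*} [CommSemiring R]
    [AddCommMonoid M] [Module R M] [AddCommMonoid N] [Module R N] {φ : Module.Dual R N} {t : N}
    (ht : φ t = 1) : Injective fun x : M => x ⊗ₜ[R] t := by
  refine LeftInverse.injective (g := fun z => TensorProduct.rid R M (φ.lTensor M z)) fun x => ?_
  simp [ht]

open PiTensorProduct in
theorem JFu_injective_general {I : Type*} [DecidableEq I]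
    (X : I → Type*) [∀ i, AddCommGroup (X i)] [∀ i, Module ℂ (X i)]
    (u : ∀ i, X i) (hu : ∀ i, u i ≠ 0) (F : Finset I)
    (J : (⨂[ℂ] (i : F), X i) →ₗ[ℂ] ⨂[ℂ] i, X i)
    (hJ : ∀ x : ∀ i : F, X i,
      J (PiTensorProduct.tprod ℂ x) =
        PiTensorProduct.tprod ℂ (fun i => if h : i ∈ F then x ⟨i, h⟩ else u i)) :
    Function.Injective J := by
  obtain ⟨φ, hφ⟩ :=
    exists_dual_tprod_eq_one (K := ℂ) (X := fun i : {i // i ∉ F} => X i) (fun i => hu i)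
  have hsplit : ∀ z, subtypeComplEquiv ℂ (· ∈ F) (J z) =
      z ⊗ₜ tprod ℂ (fun i : {i // i ∉ F} => u i) := by
    intro z
    induction z using PiTensorProduct.induction_on with
    | smul_tprod r x =>
      have hF : (fun i : F => if h : (i : I) ∈ F then x ⟨i, h⟩ else u i) = x :=
        funext fun i => dif_pos i.2
      have hFc : (fun i : {i // i ∉ F} => if h : (i : I) ∈ F then x ⟨i, h⟩ else u i) =
          fun i : {i // i ∉ F} => u i :=
        funext fun i => dif_neg i.2
      rw [map_smul, map_smul, hJ, subtypeComplEquiv_tprod, TensorProduct.smul_tmul', hF, hFc]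
    | add x y hx hy => rw [map_add, map_add, hx, hy, TensorProduct.add_tmul]
  intro a b hab
  exact TensorProduct.tmul_right_injective_of_apply_eq_one hφ <| by
    simpa only [hsplit] using congrArg (subtypeComplEquiv ℂ (· ∈ F)) hab

/-- If `u` is a family of nonzero vectors and `F` a nonempty finite subset of the infinite
index set `I`, then the linear map `J_F^u : ⨂_{i∈F} X_i → ⨂_{i∈I} X_i`, determined on
elementary tensors by filling in the coordinates outside `F` with the `u_i`'s, is injective. -/
theorem JFu_injective {I : Type*} [Infinite I] [DecidableEq I]
    (X : I → Type*) [∀ i, AddCommGroup (X i)] [∀ i, Module ℂ (X i)]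
    (u : ∀ i, X i) (hu : ∀ i, u i ≠ 0) (F : Finset I) (hF : F.Nonempty)
    (J : (⨂[ℂ] (i : F), X i) →ₗ[ℂ] ⨂[ℂ] i, X i)
    (hJ : ∀ x : ∀ i : F, X i,
      J (PiTensorProduct.tprod ℂ x) =
        PiTensorProduct.tprod ℂ (fun i => if h : i ∈ F then x ⟨i, h⟩ else u i)) :
    Function.Injective J :=
  JFu_injective_general X u hu F J hJ
end

section
/- Let Π^eu denote {x ∈ Π_{i∈I} H_i : ‖x_i‖ = 1 for all but finitely many i ∈ I}. Let K be a complex inner product space and let Φ : Π^eu → K satisfy: (multilinearity) for every x ∈ Π^eu, i₀ ∈ I, c ∈ ℂ and v, w ∈ H_{i₀}, Φ(Function.update x i₀ (c•v + w)) = c•Φ(Function.update x i₀ v) + Φ(Function.update x i₀ w); and (componentwise inner-product preservation) for all x, y ∈ Π^eu, ⟪Φ(x), Φ(y)⟫_K = ∏_{i∈I} ⟪x_i, y_i⟫ (a finite product, as finprod) if x ∼ y, and ⟪Φ(x), Φ(y)⟫_K = 0 if x ≁ y. Then there is a unique ℂ-linear map Φ̃ : ⨂^un_{i∈I} H_i →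 K with Φ̃(⊗x) = Φ(x) for every x ∈ Π^eu; moreover, for any map B : (⨂^un_{i∈I} H_i) × (⨂^un_{i∈I} H_i) → ℂ that is conjugate-ℂ-linear in the first variable, ℂ-linear in the second, and satisfies B(⊗x, ⊗y) = h(x,y) whenever ‖x_i‖ = ‖y_i‖ = 1 for every i, one has ⟪Φ̃(ξ), Φ̃(η)⟫_K = B(ξ, η) for all ξ, η ∈ ⨂^un_{i∈I} H_i (Φ̃ is an isometry). -/
open scoped TensorProduct Classical ComplexConjugate

/-- The form `h(x,y)`: the (finite) product `∏_{i∈I} ⟪x_i, y_i⟫` when `⟪x_i, y_i⟫ = 1` for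
all but finitely many `i`, and `0` otherwise. -/
noncomputable def hform {I : Type*} (H : I → Type*) [∀ i, NormedAddCommGroup (H i)]
    [∀ i, InnerProductSpace ℂ (H i)] (x y : ∀ i, H i) : ℂ :=
  if {i | (inner ℂ (x i) (y i) : ℂ) ≠ 1}.Finite then ∏ᶠ i, (inner ℂ (x i) (y i) : ℂ) else 0

/-- `⨂^un_{i∈I} H_i`: the span in `⨂_{i∈I} H_i` of the elementary tensors of families of
unit vectors. -/
noncomputable def unTensorSpan {I : Type*} (H : I → Type*) [∀ i, NormedAddCommGroup (H i)]
    [∀ i, InnerProductSpace ℂ (H i)] : Submodule ℂ (⨂[ℂ] i, H i) :=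
  Submodule.span ℂ {t | ∃ x : ∀ i, H i, (∀ i, ‖x i‖ = 1) ∧ t = PiTensorProduct.tprod ℂ x}

/-!
Extending `Φ` by zero off `Π^eu` gives a multilinear map on all of `Π_{i∈I} H_i`, because
changing one coordinate does not affect membership in `Π^eu`; its lift to `⨂_{i∈I} H_i`,
restricted to `⨂^un_{i∈I} H_i`, is `Φ̃`. Uniqueness and the isometry identity are both
(sesqui)linear statements, so it suffices to check them on the unit elementary tensors, which span
`⨂^un_{i∈I} H_i`; there `⟪Φ x, Φ y⟫ = h(x, y)` because unit vectors satisfy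
`⟪x_i, y_i⟫ = 1 ↔ x_i = y_i`.
-/

open Function PiTensorProduct

section EventuallyUnit

variable {ι : Type*} {E : ι → Type*} [∀ i, SeminormedAddCommGroup (E i)]

/-- Membership in `Π^eu`. -/
def IsEventuallyUnit (x : ∀ i, E i) : Prop :=
  {i | ‖x i‖ ≠ 1}.Finite

theorem isEventuallyUnit_of_forall_norm_eq_one {x : ∀ i, E i} (hx : ∀ i, ‖x i‖ = 1) :
    IsEventuallyUnit x := by
  simp [IsEventuallyUnit, hx]

theorem IsEventuallyUnit.of_eqOn_compl_singleton {x y : ∀ i, E i} {i₀ : ι}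
    (hxy : ∀ i ≠ i₀, x i = y i) (hx : IsEventuallyUnit x) : IsEventuallyUnit y := by
  refine (hx.union (Set.finite_singleton i₀)).subset fun i hi => ?_
  by_cases h : i = i₀
  · exact Or.inr h
  · exact Or.inl (by simpa [hxy i h] using hi)

theorem isEventuallyUnit_update_iff [DecidableEq ι] {x : ∀ i, E i} {i₀ : ι} {u : E i₀} :
    IsEventuallyUnit (update x i₀ u) ↔ IsEventuallyUnit x :=
  ⟨.of_eqOn_compl_singleton fun _ h => update_of_ne h _ _,
    .of_eqOn_compl_singleton fun _ h => (update_of_ne h _ _).symm⟩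

variable {R : Type*} [CommSemiring R] [∀ i, Module R (E i)] {F : Type*} [AddCommGroup F]
  [Module R F] [decEq : DecidableEq ι] {Φ : (∀ i, E i) → F}

variable (R) in
def IsMultilinearOnEventuallyUnit (Φ : (∀ i, E i) → F) : Prop :=
  ∀ x, IsEventuallyUnit x → ∀ (i₀ : ι) (c : R) (v w : E i₀),
    Φ (update x i₀ (c • v + w)) = c • Φ (update x i₀ v) + Φ (update x i₀ w)

theorem ite_isEventuallyUnit_update_smul_add (hΦ : IsMultilinearOnEventuallyUnit R Φ)
    (x : ∀ i, E i) (i₀ : ι) (c : R) (v w : E i₀) :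
    (if IsEventuallyUnit (update x i₀ (c • v + w)) then Φ (update x i₀ (c • v + w)) else 0) =
      c • (if IsEventuallyUnit (update x i₀ v) then Φ (update x i₀ v) else 0) +
        (if IsEventuallyUnit (update x i₀ w) then Φ (update x i₀ w) else 0) := by
  by_cases hx : IsEventuallyUnit x
  · simp only [isEventuallyUnit_update_iff, if_pos hx]
    exact hΦ x hx i₀ c v w
  · simp [isEventuallyUnit_update_iff, hx]

/-- Extension by zero off `Π^eu`. -/
noncomputable def MultilinearMap.ofEventuallyUnit (hΦ : IsMultilinearOnEventuallyUnit R Φ) :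
    MultilinearMap R E F where
  toFun x := if IsEventuallyUnit x then Φ x else 0
  map_update_add' := @fun d x i v w => by
    obtain rfl := Subsingleton.elim d decEq
    convert ite_isEventuallyUnit_update_smul_add hΦ x i 1 v w using 2 <;> simp
  map_update_smul' := @fun d x i c v => by
    obtain rfl := Subsingleton.elim d decEq
    have hzero := ite_isEventuallyUnit_update_smul_add hΦ x i 1 0 0
    simp only [one_smul, add_zero, left_eq_add] at hzero
    convert ite_isEventuallyUnit_update_smul_add hΦ x i c v 0 using 2 <;> simp [hzero]

theorem MultilinearMap.ofEventuallyUnit_apply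
    (hΦ : IsMultilinearOnEventuallyUnit R Φ)
    {x : ∀ i, E i} (hx : IsEventuallyUnit x) : MultilinearMap.ofEventuallyUnit hΦ x = Φ x := by
  simp [MultilinearMap.ofEventuallyUnit, hx]

end EventuallyUnit

section unTensorSpan

variable {I : Type*} {H : I → Type*} [∀ i, NormedAddCommGroup (H i)]
  [∀ i, InnerProductSpace ℂ (H i)]

theorem tprod_mem_unTensorSpan {x : ∀ i, H i} (hx : ∀ i, ‖x i‖ = 1) :
    tprod ℂ x ∈ unTensorSpan H :=
  Submodule.subset_span ⟨x, hx, rfl⟩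

theorem unTensorSpan_ext {S M : Type*} [Semiring S] [AddCommMonoid M] [Module S M]
    {σ : ℂ →+* S} {f g : unTensorSpan H →ₛₗ[σ] M}
    (h : ∀ x (hx : ∀ i, ‖x i‖ = 1),
      f ⟨tprod ℂ x, tprod_mem_unTensorSpan hx⟩ = g ⟨tprod ℂ x, tprod_mem_unTensorSpan hx⟩) :
    f = g :=
  LinearMap.ext_on Submodule.span_span_coe_preimage <| by
    rintro ⟨_, _⟩ ⟨x, hx, rfl⟩
    exact h x hx

theorem hform_of_forall_norm_eq_one {x y : ∀ i, H i} (hx : ∀ i, ‖x i‖ = 1)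
    (hy : ∀ i, ‖y i‖ = 1) :
    hform H x y = if {i | x i ≠ y i}.Finite then ∏ᶠ i, (inner ℂ (x i) (y i) : ℂ) else 0 := by
  have : {i | (inner ℂ (x i) (y i) : ℂ) ≠ 1} = {i | x i ≠ y i} := by
    ext i
    exact (inner_eq_one_iff_of_norm_eq_one (hx i) (hy i)).not
  rw [hform, this]

end unTensorSpan

theorem unTensorSpan_universal_property_general {I : Type*} [DecidableEq I]
    (H : I → Type*) [∀ i, NormedAddCommGroup (H i)] [∀ i, InnerProductSpace ℂ (H i)]
    (K : Type*) [NormedAddCommGroup K] [InnerProductSpace ℂ K]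
    (Φ : (∀ i, H i) → K)
    (hmul : ∀ x : ∀ i, H i, {i | ‖x i‖ ≠ 1}.Finite →
      ∀ (i₀ : I) (c : ℂ) (v w : H i₀),
        Φ (Function.update x i₀ (c • v + w)) =
          c • Φ (Function.update x i₀ v) + Φ (Function.update x i₀ w))
    (hip : ∀ x y : ∀ i, H i, {i | ‖x i‖ ≠ 1}.Finite → {i | ‖y i‖ ≠ 1}.Finite →
      ({i | x i ≠ y i}.Finite →
        (inner ℂ (Φ x) (Φ y) : ℂ) = ∏ᶠ i, (inner ℂ (x i) (y i) : ℂ)) ∧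
      (¬ {i | x i ≠ y i}.Finite → (inner ℂ (Φ x) (Φ y) : ℂ) = 0)) :
    (∃! Φt : unTensorSpan H →ₗ[ℂ] K,
      ∀ x : ∀ i, H i, {i | ‖x i‖ ≠ 1}.Finite →
        ∀ h : PiTensorProduct.tprod ℂ x ∈ unTensorSpan H,
          Φt ⟨PiTensorProduct.tprod ℂ x, h⟩ = Φ x) ∧
    (∀ Φt : unTensorSpan H →ₗ[ℂ] K,
      (∀ x : ∀ i, H i, {i | ‖x i‖ ≠ 1}.Finite →
        ∀ h : PiTensorProduct.tprod ℂ x ∈ unTensorSpan H,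
          Φt ⟨PiTensorProduct.tprod ℂ x, h⟩ = Φ x) →
      ∀ B : unTensorSpan H → unTensorSpan H → ℂ,
        (∀ ξ ξ' η : unTensorSpan H, B (ξ + ξ') η = B ξ η + B ξ' η) →
        (∀ (c : ℂ) (ξ η : unTensorSpan H), B (c • ξ) η = conj c * B ξ η) →
        (∀ ξ η η' : unTensorSpan H, B ξ (η + η') = B ξ η + B ξ η') →
        (∀ (c : ℂ) (ξ η : unTensorSpan H), B ξ (c • η) = c * B ξ η) →
        (∀ (x y : ∀ i, H i) (hx : ∀ i, ‖x i‖ = 1) (hy : ∀ i, ‖y i‖ = 1)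
          (hmx : PiTensorProduct.tprod ℂ x ∈ unTensorSpan H)
          (hmy : PiTensorProduct.tprod ℂ y ∈ unTensorSpan H),
          B ⟨PiTensorProduct.tprod ℂ x, hmx⟩ ⟨PiTensorProduct.tprod ℂ y, hmy⟩ =
            hform H x y) →
        ∀ ξ η : unTensorSpan H, (inner ℂ (Φt ξ) (Φt η) : ℂ) = B ξ η) := by
  let Φt₀ := (lift (MultilinearMap.ofEventuallyUnit hmul)).comp (unTensorSpan H).subtype
  have hΦt₀ : ∀ x : ∀ i, H i, {i | ‖x i‖ ≠ 1}.Finite →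
      ∀ h : tprod ℂ x ∈ unTensorSpan H, Φt₀ ⟨tprod ℂ x, h⟩ = Φ x :=
    fun x hx _ => (lift.tprod x).trans (MultilinearMap.ofEventuallyUnit_apply hmul hx)
  refine ⟨⟨Φt₀, hΦt₀, fun Φt hΦt => unTensorSpan_ext fun x hx => ?_⟩, ?_⟩
  · have hxe := isEventuallyUnit_of_forall_norm_eq_one hx
    rw [hΦt x hxe, hΦt₀ x hxe]
  intro Φt hΦt B hB₁ hB₂ hB₃ hB₄ hBh ξ η
  let Bₛ : unTensorSpan H →ₗ⋆[ℂ] unTensorSpan H →ₗ[ℂ] ℂ :=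
    LinearMap.mk₂'ₛₗ _ _ B hB₁ hB₂ hB₃ hB₄
  suffices ((innerₛₗ ℂ).comp Φt).compl₂ Φt = Bₛ from LinearMap.congr_fun₂ this ξ η
  refine unTensorSpan_ext fun x hx => unTensorSpan_ext fun y hy => ?_
  have hxe := isEventuallyUnit_of_forall_norm_eq_one hx
  have hye := isEventuallyUnit_of_forall_norm_eq_one hy
  obtain ⟨hfin, hinf⟩ := hip x y hxe hye
  simp only [LinearMap.compl₂_apply, LinearMap.comp_apply, innerₛₗ_apply_apply, hΦt x hxe,
    hΦt y hye, Bₛ, LinearMap.mk₂'ₛₗ_apply, hBh x y hx hy, hform_of_forall_norm_eq_one hx hy]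
  split_ifs with h
  exacts [hfin h, hinf h]

/-- Universal property of `⨂^un_{i∈I} H_i`: every componentwise inner-product preserving
multilinear map `Φ` on the eventually-unit families factors uniquely through a linear map
`Φ̃` on `⨂^un_{i∈I} H_i`, and `Φ̃` is an isometry for any sesquilinear form `B` extending `h`. -/
theorem unTensorSpan_universal_property {I : Type*} [Infinite I] [DecidableEq I]
    (H : I → Type*) [∀ i, NormedAddCommGroup (H i)] [∀ i, InnerProductSpace ℂ (H i)]
    (K : Type*) [NormedAddCommGroup K] [InnerProductSpace ℂ K]
    (Φ : (∀ i, H i) → K)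
    (hmul : ∀ x : ∀ i, H i, {i | ‖x i‖ ≠ 1}.Finite →
      ∀ (i₀ : I) (c : ℂ) (v w : H i₀),
        Φ (Function.update x i₀ (c • v + w)) =
          c • Φ (Function.update x i₀ v) + Φ (Function.update x i₀ w))
    (hip : ∀ x y : ∀ i, H i, {i | ‖x i‖ ≠ 1}.Finite → {i | ‖y i‖ ≠ 1}.Finite →
      ({i | x i ≠ y i}.Finite →
        (inner ℂ (Φ x) (Φ y) : ℂ) = ∏ᶠ i, (inner ℂ (x i) (y i) : ℂ)) ∧
      (¬ {i | x i ≠ y i}.Finite → (inner ℂ (Φ x) (Φ y) : ℂ) = 0)) :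
    (∃! Φt : unTensorSpan H →ₗ[ℂ] K,
      ∀ x : ∀ i, H i, {i | ‖x i‖ ≠ 1}.Finite →
        ∀ h : PiTensorProduct.tprod ℂ x ∈ unTensorSpan H,
          Φt ⟨PiTensorProduct.tprod ℂ x, h⟩ = Φ x) ∧
    (∀ Φt : unTensorSpan H →ₗ[ℂ] K,
      (∀ x : ∀ i, H i, {i | ‖x i‖ ≠ 1}.Finite →
        ∀ h : PiTensorProduct.tprod ℂ x ∈ unTensorSpan H,
          Φt ⟨PiTensorProduct.tprod ℂ x, h⟩ = Φ x) →
      ∀ B : unTensorSpan H → unTensorSpan H → ℂ,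
        (∀ ξ ξ' η : unTensorSpan H, B (ξ + ξ') η = B ξ η + B ξ' η) →
        (∀ (c : ℂ) (ξ η : unTensorSpan H), B (c • ξ) η = conj c * B ξ η) →
        (∀ ξ η η' : unTensorSpan H, B ξ (η + η') = B ξ η + B ξ η') →
        (∀ (c : ℂ) (ξ η : unTensorSpan H), B ξ (c • η) = c * B ξ η) →
        (∀ (x y : ∀ i, H i) (hx : ∀ i, ‖x i‖ = 1) (hy : ∀ i, ‖y i‖ = 1)
          (hmx : PiTensorProduct.tprod ℂ x ∈ unTensorSpan H)
          (hmy : PiTensorProduct.tprod ℂ y ∈ unTensorSpan H),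
          B ⟨PiTensorProduct.tprod ℂ x, hmx⟩ ⟨PiTensorProduct.tprod ℂ y, hmy⟩ =
            hform H x y) →
        ∀ ξ η : unTensorSpan H, (inner ℂ (Φt ξ) (Φt η) : ℂ) = B ξ η) :=
  unTensorSpan_universal_property_general H K Φ hmul hip
end
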